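/- arXiv:1605.06301 — 6 statements merged into one kernel-verified Lean document; each statement's English description precedes it below -/
import Mathlib

section
/- Let n ≥ 1 and let x, y, v, w be real numbers with v = max(u - x, 0) and w = max(u - y, 0) for some real u. Then (y - x)·((n+1)·w - n·v) ≤ -n·v² + (2n+1)·v·w - (n+1)·w², and therefore (y - x)·((n+1)·w - n·v) ≤ w²/(4n). -/
/-- With `v = (u-x)⁺` and `w = (u-y)⁺`, one has
`(y-x)((n+1)w - nv) ≤ -n v² + (2n+1) v w - (n+1) w² ≤ w²/(4n)`. -/
theorem penalization_contraction_bound (n : ℕ) (hn : 1 ≤ n) (u x y v w : ℝ)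
    (hv : v = max (u - x) 0) (hw : w = max (u - y) 0) :
    ((y - x) * ((n + 1) * w - n * v)
      ≤ -(n : ℝ) * v ^ 2 + (2 * n + 1) * v * w - (n + 1) * w ^ 2) ∧
    ((y - x) * ((n + 1) * w - n * v) ≤ w ^ 2 / (4 * n)) := by
  have hn' : (1 : ℝ) ≤ (n : ℝ) := by exact_mod_cast hn
  have h1 : (y - x) * ((n + 1) * w - n * v)
      ≤ -(n : ℝ) * v ^ 2 + (2 * n + 1) * v * w - (n + 1) * w ^ 2 := by
    subst hv hw
    rcases le_total (u - x) 0 with ha | ha <;> rcases le_total (u - y) 0 with hb | hb <;>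
      simp [max_eq_left, max_eq_right, ha, hb]
    · nlinarith [mul_nonneg (neg_nonneg.mpr ha) hb, sq_nonneg (u - y)]
    · nlinarith [mul_nonneg ha (neg_nonneg.mpr hb), sq_nonneg (u - x)]
    · nlinarith [sq_nonneg (u - x - (u - y))]
  refine ⟨h1, h1.trans ?_⟩
  have h4n : (0 : ℝ) < 4 * n := by linarith
  rw [le_div_iff₀ h4n]
  nlinarith [sq_nonneg (2 * (n : ℝ) * v - (2 * n + 1) * w)]
end

section
/- Let (uⁿ) and (Kⁿ) be sequences of continuous real-valued functions on [0,T] converging uniformly to u and K respectively, where each Kⁿ is non-decreasing. Then ∫₀ᵀ uⁿ(t) dKⁿ(t) → ∫₀ᵀ u(t) dK(t) as n → ∞. -/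
open MeasureTheory Set Filter Topology

/-!
For `g` with continuous derivative and continuous `F`, writing `g t = g a + ∫ s in a..t, g' s`
and swapping the integrals gives
`∫ t in Icc a b, g t ∂F.measure = g a * (F b - F a) + ∫ s in a..b, g' s * (F b - F s)`.
The right-hand side converges under pointwise convergence of `F` by dominated convergence, since
`0 ≤ F b - F s ≤ F b - F a` by monotonicity. Weierstrass approximation extends this to continuous
`g`, because the masses `F b - F a` stay bounded, and the same bound absorbs replacing `u` by a
uniformly close `uₙ`.
-/

section Approximation

variable {ι α : Type*} [PseudoMetricSpace α] {l : Filter ι} {x : ι → α} {a : α}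

theorem tendsto_of_forall_exists_tendsto_near
    (h : ∀ ε > 0, ∃ y : ι → α, ∃ b, Tendsto y l (𝓝 b) ∧ (∀ᶠ i in l, dist (x i) (y i) ≤ ε) ∧
      dist a b ≤ ε) :
    Tendsto x l (𝓝 a) := by
  refine Metric.tendsto_nhds.2 fun ε hε => ?_
  obtain ⟨y, b, hy, hxy, hab⟩ := h (ε / 4) (by positivity)
  filter_upwards [hxy, Metric.tendsto_nhds.1 hy (ε / 4) (by positivity)] with i hxi hyi
  calc dist (x i) a ≤ dist (x i) (y i) + dist (y i) b + dist b a := dist_triangle4 _ _ _ _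
    _ < ε := by rw [dist_comm b]; linarith

end Approximation

section SetIntegral

variable {ι α E : Type*} [MeasurableSpace α] [NormedAddCommGroup E] [NormedSpace ℝ E]
  {l : Filter ι} {s : Set α}

theorem dist_setIntegral_le_of_forall_dist_le {μ : Measure α} {f g : α → E} {δ : ℝ}
    (hs : μ s < ⊤) (hf : IntegrableOn f s μ) (hg : IntegrableOn g s μ)
    (hfg : ∀ x ∈ s, dist (f x) (g x) ≤ δ) :
    dist (∫ x in s, f x ∂μ) (∫ x in s, g x ∂μ) ≤ δ * μ.real s := by
  rw [dist_eq_norm, ← integral_sub hf hg]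
  exact norm_setIntegral_le_of_norm_le_const hs fun x hx => by simpa [dist_eq_norm] using hfg x hx

theorem Filter.Tendsto.setIntegral_of_tendstoUniformlyOn {μ : ι → Measure α} {f : ι → α → E}
    {g : α → E} {L : E} {C : ℝ} (hs : ∀ i, μ i s < ⊤) (hμ : ∀ᶠ i in l, (μ i).real s ≤ C)
    (hf : ∀ i, IntegrableOn (f i) s (μ i)) (hg : ∀ i, IntegrableOn g s (μ i))
    (hfg : TendstoUniformlyOn f g l s) (hlim : Tendsto (fun i => ∫ x in s, g x ∂μ i) l (𝓝 L)) :
    Tendsto (fun i => ∫ x in s, f i x ∂μ i) l (𝓝 L) := by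
  refine tendsto_of_forall_exists_tendsto_near fun ε hε => ⟨_, L, hlim, ?_, by simpa using hε.le⟩
  have hδ : 0 < ε / (|C| + 1) := by positivity
  filter_upwards [hμ, Metric.tendstoUniformlyOn_iff.1 hfg _ hδ] with i hμi hfgi
  calc _ ≤ ε / (|C| + 1) * (μ i).real s :=
        dist_setIntegral_le_of_forall_dist_le (hs i) (hf i) (hg i) fun x hx =>
          (dist_comm (g x) (f i x) ▸ hfgi x hx).le
    _ ≤ ε / (|C| + 1) * (|C| + 1) := by gcongr; linarith [le_abs_self C]
    _ = ε := div_mul_cancel₀ _ (by positivity)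

end SetIntegral

namespace StieltjesFunction

variable (F : StieltjesFunction ℝ)

theorem measure_Icc_of_continuous (hF : Continuous F) (a b : ℝ) :
    F.measure (Icc a b) = ENNReal.ofReal (F b - F a) := by
  rw [F.measure_Icc, hF.continuousWithinAt.leftLim_eq]

theorem measureReal_Icc_of_continuous (hF : Continuous F) {a b : ℝ} (hab : a ≤ b) :
    F.measure.real (Icc a b) = F b - F a := by
  rw [measureReal_def, F.measure_Icc_of_continuous hF,
    ENNReal.toReal_ofReal (sub_nonneg.2 (F.mono hab))]

theorem setIntegral_Icc_eq_of_hasDerivAt (hF : Continuous F) {g g' : ℝ → ℝ}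
    (hg : ∀ x, HasDerivAt g (g' x) x) (hg' : Continuous g') {a b : ℝ} (hab : a ≤ b) :
    ∫ t in Icc a b, g t ∂F.measure = g a * (F b - F a) + ∫ s in a..b, g' s * (F b - F s) := by
  set φ : ℝ × ℝ → ℝ := {p | p.2 ≤ p.1}.indicator (fun p => g' p.2)
  have hφ : Integrable φ ((F.measure.restrict (Icc a b)).prod (volume.restrict (Ioc a b))) := by
    rw [Measure.prod_restrict]
    refine IntegrableOn.indicator ?_ (measurableSet_le measurable_snd measurable_fst)
    exact ((hg'.comp continuous_snd).continuousOn.integrableOn_compact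
      (isCompact_Icc.prod isCompact_Icc)).mono_set (prod_mono subset_rfl Ioc_subset_Icc_self)
  have inner_t : ∀ t ∈ Icc a b, ∫ s in Ioc a b, φ (t, s) = g t - g a := by
    intro t ht
    have : ∀ s, φ (t, s) = (Iic t).indicator g' s := fun s => by simp [φ, indicator_apply]
    simp_rw [this]
    rw [setIntegral_indicator measurableSet_Iic, Ioc_inter_Iic, min_eq_right ht.2,
      ← intervalIntegral.integral_of_le ht.1,
      intervalIntegral.integral_eq_sub_of_hasDerivAt (fun x _ => hg x) (hg'.intervalIntegrable _ _)]
  have inner_s : ∀ s ∈ Ioc a b, ∫ t in Icc a b, φ (t, s) ∂F.measure = g' s * (F b - F s) := by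
    intro s hs
    have : ∀ t, φ (t, s) = (Ici s).indicator (fun _ => g' s) t := fun t => by
      simp [φ, indicator_apply]
    simp_rw [this]
    have hIcc : Icc a b ∩ Ici s = Icc s b := by
      ext t; simp only [mem_inter_iff, mem_Icc, mem_Ici]; grind
    rw [setIntegral_indicator measurableSet_Ici, hIcc, setIntegral_const, F.measureReal_Icc_of_continuous hF hs.2, smul_eq_mul, mul_comm]
  calc ∫ t in Icc a b, g t ∂F.measure
      = ∫ t in Icc a b, (g a + ∫ s in Ioc a b, φ (t, s)) ∂F.measure :=
        setIntegral_congr_fun measurableSet_Icc fun t ht => by rw [inner_t t ht]; ring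
    _ = g a * (F b - F a) + ∫ t in Icc a b, (∫ s in Ioc a b, φ (t, s)) ∂F.measure := by
        rw [integral_add (integrableOn_const measure_Icc_lt_top.ne : IntegrableOn (fun _ => g a) _ _)
          hφ.integral_prod_left, setIntegral_const,
          F.measureReal_Icc_of_continuous hF hab, smul_eq_mul, mul_comm]
    _ = g a * (F b - F a) + ∫ s in Ioc a b, ∫ t in Icc a b, φ (t, s) ∂F.measure := by
        exact congrArg _ (integral_integral_swap (f := fun t s => φ (t, s)) hφ)
    _ = g a * (F b - F a) + ∫ s in a..b, g' s * (F b - F s) := by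
        rw [intervalIntegral.integral_of_le hab, setIntegral_congr_fun measurableSet_Ioc inner_s]

end StieltjesFunction

section Convergence

variable {ι : Type*} {l : Filter ι} {F : ι → StieltjesFunction ℝ} {G : StieltjesFunction ℝ}
  {a b : ℝ}

theorem eventually_measureReal_Icc_lt (hF : ∀ i, Continuous (F i)) (hab : a ≤ b)
    (ha : Tendsto (fun i => F i a) l (𝓝 (G a))) (hb : Tendsto (fun i => F i b) l (𝓝 (G b))) :
    ∀ᶠ i in l, (F i).measure.real (Icc a b) < G b - G a + 1 := by
  filter_upwards [(hb.sub ha).eventually (gt_mem_nhds (lt_add_one _))] with i hi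
  rwa [(F i).measureReal_Icc_of_continuous (hF i) hab]

theorem tendsto_setIntegral_Icc_of_hasDerivAt [l.IsCountablyGenerated]
    (hF : ∀ i, Continuous (F i)) (hG : Continuous G) (hab : a ≤ b)
    (hlim : ∀ x ∈ Icc a b, Tendsto (fun i => F i x) l (𝓝 (G x))) {g g' : ℝ → ℝ}
    (hg : ∀ x, HasDerivAt g (g' x) x) (hg' : Continuous g') :
    Tendsto (fun i => ∫ t in Icc a b, g t ∂(F i).measure) l
      (𝓝 (∫ t in Icc a b, g t ∂G.measure)) := by
  have ha := hlim a (left_mem_Icc.2 hab)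
  have hb := hlim b (right_mem_Icc.2 hab)
  simp only [StieltjesFunction.setIntegral_Icc_eq_of_hasDerivAt _ (hF _) hg hg' hab,
    G.setIntegral_Icc_eq_of_hasDerivAt hG hg hg' hab]
  refine ((hb.sub ha).const_mul (g a)).add ?_
  refine intervalIntegral.tendsto_integral_filter_of_dominated_convergence
    (fun s => |g' s| * (G b - G a + 1))
    (Eventually.of_forall fun i => (hg'.mul (continuous_const.sub (hF i))).aestronglyMeasurable)
    ?_ ((hg'.abs.mul continuous_const).intervalIntegrable _ _) ?_
  · filter_upwards [(hb.sub ha).eventually (gt_mem_nhds (lt_add_one _))] with i hi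
    refine Eventually.of_forall fun s hs => ?_
    rw [uIoc_of_le hab] at hs
    rw [norm_mul, Real.norm_eq_abs, Real.norm_eq_abs,
      abs_of_nonneg (sub_nonneg.2 ((F i).mono hs.2))]
    gcongr
    linarith [(F i).mono hs.1.le]
  · refine Eventually.of_forall fun s hs => ?_
    rw [uIoc_of_le hab] at hs
    exact (hb.sub (hlim s (Ioc_subset_Icc_self hs))).const_mul _

theorem tendsto_setIntegral_Icc_of_continuousOn [l.IsCountablyGenerated]
    (hF : ∀ i, Continuous (F i)) (hG : Continuous G) (hab : a ≤ b)
    (hlim : ∀ x ∈ Icc a b, Tendsto (fun i => F i x) l (𝓝 (G x))) {g : ℝ → ℝ}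
    (hg : ContinuousOn g (Icc a b)) :
    Tendsto (fun i => ∫ t in Icc a b, g t ∂(F i).measure) l
      (𝓝 (∫ t in Icc a b, g t ∂G.measure)) := by
  set M := G b - G a + 1
  have hM : 0 < M := by linarith [G.mono hab]
  refine tendsto_of_forall_exists_tendsto_near fun ε hε => ?_
  obtain ⟨p, hp⟩ := exists_polynomial_near_of_continuousOn a b g hg (ε / M) (by positivity)
  have hgp : ∀ μ : Measure ℝ, [IsLocallyFiniteMeasure μ] → μ.real (Icc a b) ≤ M →
      dist (∫ t in Icc a b, g t ∂μ) (∫ t in Icc a b, p.eval t ∂μ) ≤ ε := by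
    intro μ _ hμ
    calc _ ≤ ε / M * μ.real (Icc a b) :=
          dist_setIntegral_le_of_forall_dist_le measure_Icc_lt_top hg.integrableOn_Icc
            p.continuous.integrableOn_Icc fun x hx => by
              rw [dist_comm, Real.dist_eq]; exact (hp x hx).le
      _ ≤ ε / M * M := by gcongr
      _ = ε := div_mul_cancel₀ _ hM.ne'
  refine ⟨_, _, tendsto_setIntegral_Icc_of_hasDerivAt hF hG hab hlim p.hasDerivAt
    p.derivative.continuous, ?_, hgp _ ?_⟩
  · filter_upwards [eventually_measureReal_Icc_lt hF hab (hlim a (left_mem_Icc.2 hab))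
      (hlim b (right_mem_Icc.2 hab))] with i hi using hgp _ hi.le
  · rw [G.measureReal_Icc_of_continuous hG hab]; linarith

end Convergence

/-- If continuous `uₙ → u` and continuous non-decreasing `Kₙ → K` uniformly on `[0,T]`,
then `∫₀ᵀ uₙ dKₙ → ∫₀ᵀ u dK`. -/
theorem stieltjes_integral_convergence (T : ℝ) (hT : 0 < T)
    (un : ℕ → ℝ → ℝ) (Kn : ℕ → StieltjesFunction ℝ)
    (u : ℝ → ℝ) (K : StieltjesFunction ℝ)
    (hun : ∀ n, Continuous (un n)) (hKn : ∀ n, Continuous ⇑(Kn n))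
    (hu : Continuous u) (hK : Continuous ⇑K)
    (huconv : TendstoUniformlyOn (fun n t => un n t) u atTop (Icc 0 T))
    (hKconv : TendstoUniformlyOn (fun n t => Kn n t) (⇑K) atTop (Icc 0 T)) :
    Tendsto (fun n => ∫ t in Icc 0 T, un n t ∂(Kn n).measure) atTop
      (nhds (∫ t in Icc 0 T, u t ∂K.measure)) := by
  have hlim : ∀ x ∈ Icc 0 T, Tendsto (fun n => Kn n x) atTop (𝓝 (K x)) :=
    fun x hx => hKconv.tendsto_at hx
  have hmass := eventually_measureReal_Icc_lt hKn hT.le (hlim 0 (left_mem_Icc.2 hT.le))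
    (hlim T (right_mem_Icc.2 hT.le))
  exact (tendsto_setIntegral_Icc_of_continuousOn hKn hK hT.le hlim hu.continuousOn)
    |>.setIntegral_of_tendstoUniformlyOn (fun _ => measure_Icc_lt_top)
      (hmass.mono fun _ h => h.le) (fun n => (hun n).integrableOn_Icc)
      (fun _ => hu.integrableOn_Icc) huconv
end

section
/- Let (Ω, F, P) be a probability space and ℓ : [0,T] × ℝ → ℝ a (deterministic) function such that for each t, y ↦ ℓ(t,y) is strictly increasing, bi-Lipschitz with constants 0 < c ≤ C (i.e. c|x−y| ≤ |ℓ(t,x)−ℓ(t,y)| ≤ C|x−y|), and of linear growth. For t ∈ [0,T] and X ∈ L²(Ω) define L_t(X) = inf { x ≥ 0 : E[ℓ(t, x + X)] ≥ 0 }. Then for all X, Y ∈ L²(Ω): |L_t(X) − L_t(Y)| ≤ (C/c)·E[|X − Y|]. -/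
open MeasureTheory Set

/-!
Write `S(X) = {x ≥ 0 : E[ℓ(x + X)] ≥ 0}`, so that `L(X) = inf S(X)`. Shifting by `x` raises
`ℓ` by at least `c x`, while replacing `Y` by `X` lowers `ℓ(y + ·)` by at most `C |X - Y|`.
Hence if `y ∈ S(Y)`, then `y + (C/c) E|X - Y| ∈ S(X)`: the extra shift gains `C E|X - Y|`
in expectation, which is exactly what the change of argument can cost. This gives
`L(X) ≤ L(Y) + (C/c) E|X - Y|`, and the claim follows by symmetry.
-/

theorem LipschitzWith.integrable_comp_const_add {Ω E F : Type*} [MeasurableSpace Ω]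
    {μ : Measure Ω} [IsFiniteMeasure μ] [NormedAddCommGroup E] [NormedAddCommGroup F]
    {K : NNReal} {f : E → F} (hf : LipschitzWith K f) {Z : Ω → E} (hZ : Integrable Z μ)
    (a : E) : Integrable (fun ω => f (a + Z ω)) μ := by
  refine ((integrable_const ‖f a‖).add (hZ.norm.const_mul K)).mono'
    (hf.continuous.comp_aestronglyMeasurable (hZ.1.const_add a)) (ae_of_all _ fun ω => ?_)
  have h := hf.norm_sub_le (a + Z ω) a
  rw [add_sub_cancel_left] at h
  simpa using norm_le_norm_add_norm_sub' (f (a + Z ω)) (f a) |>.trans (by linarith)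

theorem Monotone.mul_sub_le_sub {f : ℝ → ℝ} {c : ℝ} (hf : Monotone f)
    (h : ∀ x y, c * |x - y| ≤ |f x - f y|) {a b : ℝ} (hba : b ≤ a) :
    c * (a - b) ≤ f a - f b := by
  simpa [abs_of_nonneg (sub_nonneg.2 hba), abs_of_nonneg (sub_nonneg.2 (hf hba))] using h a b

theorem csInf_le_csInf_add {S T : Set ℝ} (hS : BddBelow S) (hT : T.Nonempty) {d : ℝ}
    (h : ∀ y ∈ T, y + d ∈ S) : sInf S ≤ sInf T + d := by
  have : sInf S - d ≤ sInf T := le_csInf hT fun y hy => sub_le_iff_le_add.2 (csInf_le hS (h y hy))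
  linarith

section AcceptableShifts

variable {Ω : Type*} [MeasurableSpace Ω] (μ : Measure Ω) (f : ℝ → ℝ)

noncomputable def acceptableShifts (X : Ω → ℝ) : Set ℝ :=
  {x : ℝ | 0 ≤ x ∧ 0 ≤ ∫ ω, f (x + X ω) ∂μ}

noncomputable def riskShift (X : Ω → ℝ) : ℝ :=
  sInf (acceptableShifts μ f X)

variable {μ f} [IsProbabilityMeasure μ] {c : ℝ} {K : NNReal}

theorem acceptableShifts_nonempty (hc : 0 < c)
    (hexp : ∀ a b, b ≤ a → c * (a - b) ≤ f a - f b) (hf : LipschitzWith K f)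
    {X : Ω → ℝ} (hX : Integrable X μ) : (acceptableShifts μ f X).Nonempty := by
  set I := ∫ ω, f (0 + X ω) ∂μ
  set x := max 0 (-I / c)
  have hcx : -I ≤ c * x := by
    rw [mul_comm, ← div_le_iff₀ hc]
    exact le_max_right _ _
  refine ⟨x, le_max_left _ _, ?_⟩
  have hlower : ∫ ω, (f (0 + X ω) + c * x) ∂μ ≤ ∫ ω, f (x + X ω) ∂μ :=
    integral_mono ((hf.integrable_comp_const_add hX 0).add (integrable_const _))
      (hf.integrable_comp_const_add hX x)
      fun ω => by linarith [hexp (x + X ω) (0 + X ω) (by linarith [le_max_left 0 (-I / c)])]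
  rw [integral_add (hf.integrable_comp_const_add hX 0) (integrable_const _), integral_const,
    probReal_univ, one_smul] at hlower
  linarith

theorem add_mem_acceptableShifts (hc : 0 < c)
    (hexp : ∀ a b, b ≤ a → c * (a - b) ≤ f a - f b) (hf : LipschitzWith K f)
    {X Y : Ω → ℝ} (hX : Integrable X μ) (hY : Integrable Y μ) {y : ℝ}
    (hy : y ∈ acceptableShifts μ f Y) :
    y + (K / c) * ∫ ω, |X ω - Y ω| ∂μ ∈ acceptableShifts μ f X := by
  set δ := ∫ ω, |X ω - Y ω| ∂μ
  have hδ : 0 ≤ δ := integral_nonneg fun ω => abs_nonneg _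
  have hgain : c * ((K / c) * δ) = K * δ := by field_simp
  have hshift_nonneg : 0 ≤ (K / c) * δ := by positivity
  refine ⟨add_nonneg hy.1 hshift_nonneg, ?_⟩
  have hpt : ∀ ω, f (y + Y ω) + K * δ - K * |X ω - Y ω| ≤ f (y + (K / c) * δ + X ω) := by
    intro ω
    have hcost := hf.dist_le_mul (y + (K / c) * δ + X ω) (y + (K / c) * δ + Y ω)
    rw [Real.dist_eq, Real.dist_eq, add_sub_add_left_eq_sub] at hcost
    have hshift := hexp (y + (K / c) * δ + Y ω) (y + Y ω) (by linarith)
    rw [add_sub_add_right_eq_sub, add_sub_cancel_left, hgain] at hshift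
    linarith [neg_abs_le (f (y + (K / c) * δ + X ω) - f (y + (K / c) * δ + Y ω))]
  have hA : Integrable (fun ω => f (y + Y ω) + K * δ) μ :=
    (hf.integrable_comp_const_add hY y).add (integrable_const _)
  have hB : Integrable (fun ω => K * |X ω - Y ω|) μ := (hX.sub hY).abs.const_mul _
  have hint : ∫ ω, (f (y + Y ω) + K * δ - K * |X ω - Y ω|) ∂μ
      ≤ ∫ ω, f (y + (K / c) * δ + X ω) ∂μ :=
    integral_mono (hA.sub hB) (hf.integrable_comp_const_add hX _) hpt
  rw [integral_sub hA hB, integral_add (hf.integrable_comp_const_add hY y) (integrable_const _),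
    integral_const, probReal_univ, one_smul, integral_const_mul] at hint
  linarith [hy.2]

theorem riskShift_le_add (hc : 0 < c)
    (hexp : ∀ a b, b ≤ a → c * (a - b) ≤ f a - f b) (hf : LipschitzWith K f)
    {X Y : Ω → ℝ} (hX : Integrable X μ) (hY : Integrable Y μ) :
    riskShift μ f X ≤ riskShift μ f Y + (K / c) * ∫ ω, |X ω - Y ω| ∂μ :=
  csInf_le_csInf_add ⟨0, fun _ hx => hx.1⟩ (acceptableShifts_nonempty hc hexp hf hY)
    fun _ hy => add_mem_acceptableShifts hc hexp hf hX hY hy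

theorem abs_riskShift_sub_le (hc : 0 < c)
    (hexp : ∀ a b, b ≤ a → c * (a - b) ≤ f a - f b) (hf : LipschitzWith K f)
    {X Y : Ω → ℝ} (hX : Integrable X μ) (hY : Integrable Y μ) :
    |riskShift μ f X - riskShift μ f Y| ≤ (K / c) * ∫ ω, |X ω - Y ω| ∂μ := by
  have hXY := riskShift_le_add hc hexp hf hX hY
  have hYX := riskShift_le_add hc hexp hf hY hX
  simp_rw [abs_sub_comm (Y _)] at hYX
  exact abs_sub_le_iff.2 ⟨by linarith, by linarith⟩

end AcceptableShifts

theorem shift_operator_lipschitz_general {Ω : Type*} [MeasurableSpace Ω]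
    (μ : Measure Ω) [IsProbabilityMeasure μ]
    (T t c C : ℝ) (ht : t ∈ Icc 0 T) (hc : 0 < c) (hcC : c ≤ C)
    (ℓ : ℝ → ℝ → ℝ)
    (hmono : ∀ s ∈ Icc 0 T, StrictMono (ℓ s))
    (hbilip : ∀ s ∈ Icc 0 T, ∀ x y : ℝ,
      c * |x - y| ≤ |ℓ s x - ℓ s y| ∧ |ℓ s x - ℓ s y| ≤ C * |x - y|)
    (X Y : Ω → ℝ) (hX : MemLp X 2 μ) (hY : MemLp Y 2 μ) :
    |sInf {x : ℝ | 0 ≤ x ∧ 0 ≤ ∫ ω, ℓ t (x + X ω) ∂μ}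
      - sInf {x : ℝ | 0 ≤ x ∧ 0 ≤ ∫ ω, ℓ t (x + Y ω) ∂μ}|
      ≤ (C / c) * ∫ ω, |X ω - Y ω| ∂μ := by
  have hC : 0 ≤ C := hc.le.trans hcC
  have hexp : ∀ a b, b ≤ a → c * (a - b) ≤ ℓ t a - ℓ t b :=
    fun _ _ => (hmono t ht).monotone.mul_sub_le_sub fun x y => (hbilip t ht x y).1
  have hlip : LipschitzWith ⟨C, hC⟩ (ℓ t) :=
    LipschitzWith.of_dist_le_mul fun x y => (hbilip t ht x y).2
  exact abs_riskShift_sub_le hc hexp hlip (hX.integrable one_le_two) (hY.integrable one_le_two)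

/-- If the loss function `ℓ(t,·)` is strictly increasing, bi-Lipschitz with constants
`0 < c ≤ C` and of linear growth, then the shift operator
`L_t(X) = inf {x ≥ 0 : E[ℓ(t, x+X)] ≥ 0}` is `L¹`-Lipschitz with constant `C/c`. -/
theorem shift_operator_lipschitz {Ω : Type*} [MeasurableSpace Ω]
    (μ : Measure Ω) [IsProbabilityMeasure μ]
    (T t c C : ℝ) (ht : t ∈ Icc 0 T) (hc : 0 < c) (hcC : c ≤ C)
    (ℓ : ℝ → ℝ → ℝ)
    (hmono : ∀ s ∈ Icc 0 T, StrictMono (ℓ s))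
    (hbilip : ∀ s ∈ Icc 0 T, ∀ x y : ℝ,
      c * |x - y| ≤ |ℓ s x - ℓ s y| ∧ |ℓ s x - ℓ s y| ≤ C * |x - y|)
    (hgrowth : ∃ D : ℝ, ∀ s ∈ Icc 0 T, ∀ y : ℝ, |ℓ s y| ≤ D * (1 + |y|))
    (X Y : Ω → ℝ) (hX : MemLp X 2 μ) (hY : MemLp Y 2 μ) :
    |sInf {x : ℝ | 0 ≤ x ∧ 0 ≤ ∫ ω, ℓ t (x + X ω) ∂μ}
      - sInf {x : ℝ | 0 ≤ x ∧ 0 ≤ ∫ ω, ℓ t (x + Y ω) ∂μ}|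
      ≤ (C / c) * ∫ ω, |X ω - Y ω| ∂μ :=
  shift_operator_lipschitz_general μ T t c C ht hc hcC ℓ hmono hbilip X Y hX hY
end

section
/- Let ℓ : [0,T] × ℝ → ℝ be continuous in both variables with, for each t, y ↦ ℓ(t,y) strictly increasing and ℓ(t, y) → +∞ as y → +∞. Let x : [0,T] → ℝ be continuous and define Ψ(t) = inf { a ≥ 0 : ℓ(t, a + x(t)) ≥ 0 }. Then Ψ is a continuous function on [0,T], Ψ(t) ≥ 0, and ℓ(t, x(t) + Ψ(t)) ≥ 0 for all t; moreover whenever Ψ(t) > 0 one has ℓ(t, x(t) + Ψ(t)) = 0. -/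
open Set Filter

/-- Continuity of the deterministic shift `Ψ(t) = inf {a ≥ 0 : ℓ(t, a + x(t)) ≥ 0}`,
together with `Ψ ≥ 0`, feasibility `ℓ(t, x(t)+Ψ(t)) ≥ 0`, and exactness when `Ψ(t) > 0`. -/
theorem shift_continuity (T : ℝ) (hT : 0 < T)
    (ℓ : ℝ → ℝ → ℝ) (x : ℝ → ℝ)
    (hℓcont : Continuous fun p : ℝ × ℝ => ℓ p.1 p.2)
    (hℓmono : ∀ t, StrictMono (ℓ t))
    (hℓtop : ∀ t, Tendsto (ℓ t) atTop atTop)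
    (hx : Continuous x)
    (Ψ : ℝ → ℝ)
    (hΨ : ∀ t, Ψ t = sInf {a : ℝ | 0 ≤ a ∧ 0 ≤ ℓ t (a + x t)}) :
    ContinuousOn Ψ (Icc 0 T) ∧
    (∀ t ∈ Icc 0 T, 0 ≤ Ψ t) ∧
    (∀ t ∈ Icc 0 T, 0 ≤ ℓ t (x t + Ψ t)) ∧
    (∀ t ∈ Icc 0 T, 0 < Ψ t → ℓ t (x t + Ψ t) = 0) := by
  set S : ℝ → Set ℝ := fun t => {a : ℝ | 0 ≤ a ∧ 0 ≤ ℓ t (a + x t)} with hS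
  -- auxiliary continuity facts
  have hcontg : ∀ t : ℝ, Continuous fun a : ℝ => ℓ t (a + x t) := by
    intro t
    exact hℓcont.comp ((continuous_const.prodMk (continuous_id.add continuous_const)))
  have hcontt : ∀ c : ℝ, Continuous fun t : ℝ => ℓ t (c + x t) :=
    fun c => hℓcont.comp (continuous_id.prodMk (continuous_const.add hx))
  have hbdd : ∀ t, BddBelow (S t) := fun t => ⟨0, fun a ha => ha.1⟩
  have hne : ∀ t, (S t).Nonempty := by
    intro t
    obtain ⟨y, hy⟩ := eventually_atTop.mp ((hℓtop t).eventually_ge_atTop 0)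
    refine ⟨max 0 (y - x t), le_max_left _ _, hy _ ?_⟩
    have := le_max_right 0 (y - x t)
    linarith
  have hScl : ∀ t, IsClosed (S t) := by
    intro t
    have : S t = {a : ℝ | 0 ≤ a} ∩ {a : ℝ | 0 ≤ ℓ t (a + x t)} := rfl
    rw [this]
    exact (isClosed_le continuous_const continuous_id).inter
      (isClosed_le continuous_const (hcontg t))
  have hmem : ∀ t, Ψ t ∈ S t := by
    intro t
    rw [hΨ t]
    exact (hScl t).csInf_mem (hne t) (hbdd t)
  have hΨnn : ∀ t, 0 ≤ Ψ t := fun t => (hmem t).1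
  have hfeas : ∀ t, 0 ≤ ℓ t (x t + Ψ t) := by
    intro t
    have := (hmem t).2
    rwa [add_comm] at this
  -- exactness
  have hexact : ∀ t, 0 < Ψ t → ℓ t (x t + Ψ t) = 0 := by
    intro t ht
    by_contra hne0
    have hpos : 0 < ℓ t (Ψ t + x t) := by
      rcases lt_or_eq_of_le (hfeas t) with h | h
      · rwa [add_comm (x t)] at h
      · exact absurd h.symm hne0
    have h1 : ∀ᶠ a in nhds (Ψ t), 0 < ℓ t (a + x t) :=
      (hcontg t).continuousAt.eventually (eventually_gt_nhds hpos)
    have h2 : ∀ᶠ a in nhds (Ψ t), 0 < a := eventually_gt_nhds ht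
    have h3 : ∀ᶠ a in nhdsWithin (Ψ t) (Iio (Ψ t)),
        (0 < ℓ t (a + x t) ∧ 0 < a) ∧ a ∈ Iio (Ψ t) :=
      (((h1.and h2).filter_mono nhdsWithin_le_nhds).and self_mem_nhdsWithin)
    obtain ⟨a, ⟨ha1, ha2⟩, ha3⟩ := h3.exists
    have : Ψ t ≤ a := by
      rw [hΨ t]
      exact csInf_le (hbdd t) ⟨ha2.le, ha1.le⟩
    exact absurd ha3 (not_lt.2 this)
  -- continuity
  have hcont : Continuous Ψ := by
    rw [continuous_iff_continuousAt]
    intro t₀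
    rw [ContinuousAt, tendsto_order]
    constructor
    · intro b hb
      rcases lt_or_ge b 0 with hb0 | hb0
      · exact Eventually.of_forall fun t => lt_of_lt_of_le hb0 (hΨnn t)
      · -- b ≥ 0 and b < Ψ t₀, so ℓ t₀ (b + x t₀) < 0
        have hneg : ℓ t₀ (b + x t₀) < 0 := by
          by_contra h
          push_neg at h
          have : Ψ t₀ ≤ b := by
            rw [hΨ t₀]; exact csInf_le (hbdd t₀) ⟨hb0, h⟩
          exact absurd hb (not_lt.2 this)
        have hev : ∀ᶠ t in nhds t₀, ℓ t (b + x t) < 0 :=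
          (hcontt b).continuousAt.eventually (eventually_lt_nhds hneg)
        refine hev.mono fun t htneg => ?_
        have hlt : ℓ t (b + x t) < ℓ t (Ψ t + x t) := by
          have := (hmem t).2
          linarith
        have := ((hℓmono t).lt_iff_lt).1 hlt
        linarith
    · intro b hb
      obtain ⟨c, hc1, hc2⟩ := exists_between hb
      have hcpos : 0 ≤ c := le_trans (hΨnn t₀) hc1.le
      have hpos : 0 < ℓ t₀ (c + x t₀) := by
        have hmono := (hℓmono t₀) (by linarith : Ψ t₀ + x t₀ < c + x t₀)
        have := (hmem t₀).2
        linarith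
      have hev : ∀ᶠ t in nhds t₀, 0 < ℓ t (c + x t) :=
        (hcontt c).continuousAt.eventually (eventually_gt_nhds hpos)
      refine hev.mono fun t htpos => ?_
      have : Ψ t ≤ c := by
        rw [hΨ t]; exact csInf_le (hbdd t) ⟨hcpos, htpos.le⟩
      linarith
  exact ⟨hcont.continuousOn, fun t _ => hΨnn t, fun t _ => hfeas t, fun t _ => hexact t⟩
end

section
/- Let g : [0,T] → ℝ be continuous, and let K¹, K² : [0,T] → ℝ be continuous non-decreasing functions with K¹(0) = K²(0) = 0. Suppose that for i = 1,2 and all t ∈ [0,T]: h_i(t) := g(t) + K^i(T) − K^i(t) ≥ 0, and ∫₀ᵀ h_i(t) dK^i(t) = 0, where t ↦ h_i(t) is such that h₁(t) > h₂(t) whenever K¹(T)−K¹(t) > K²(T)−K²(t) (which holds automatically here since h₁ − h₂ = (K¹(T)−K¹(t)) − (K²(T)−K²(t))). Then K¹ = K². -/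
/-!
Write `Dⁱ(t) = Kⁱ(T) − Kⁱ(t)`. If `D¹(u) > D²(u)` somewhere, let `s` be the first time after `u`
with `D¹(s) ≤ D²(s)`. On `(u, s)` we have `h₁ > h₂ ≥ 0`, so the flatness condition forces `K¹` to
be constant on `[u, s]`; since `K²` is non-decreasing, `D¹(s) = D¹(u) > D²(u) ≥ D²(s)`, a
contradiction. Hence `D¹ ≤ D²`, by symmetry `D¹ = D²`, and `Kⁱ(0) = 0` pins down the constant.
-/

open MeasureTheory Set

theorem measure_eq_zero_of_setIntegral_eq_zero {X : Type*} [MeasurableSpace X] {μ : Measure X}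
    {s t : Set X} {h : X → ℝ} (hs : MeasurableSet s) (hint : IntegrableOn h s μ)
    (hnn : ∀ x ∈ s, 0 ≤ h x) (hzero : ∫ x in s, h x ∂μ = 0) (hts : t ⊆ s)
    (hpos : ∀ x ∈ t, 0 < h x) : μ t = 0 := by
  have hae : h =ᵐ[μ.restrict s] 0 :=
    (setIntegral_eq_zero_iff_of_nonneg_ae (ae_restrict_of_forall_mem hs hnn) hint).mp hzero
  have hnull : μ (s ∩ {x | h x ≠ 0}) = 0 := by
    rwa [Filter.EventuallyEq, ae_iff, Measure.restrict_apply' hs, inter_comm] at hae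
  exact measure_mono_null
    (fun x hx => show x ∈ s ∩ {x | h x ≠ 0} from ⟨hts hx, (hpos x hx).ne'⟩) hnull

theorem StieltjesFunction.eq_of_measure_Ioo_eq_zero (f : StieltjesFunction ℝ) {a b : ℝ}
    (hf : ContinuousAt f b) (hab : a ≤ b) (h : f.measure (Ioo a b) = 0) : f b = f a := by
  rw [StieltjesFunction.measure_Ioo, hf.continuousWithinAt.leftLim_eq,
    ENNReal.ofReal_eq_zero] at h
  linarith [f.mono hab]

theorem sub_le_sub_of_forall_Ioo_lt_imp_eq {F G : ℝ → ℝ} (hF : Continuous F) (hG : Continuous G)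
    (hGm : Monotone G) {u T : ℝ} (huT : u ≤ T)
    (hconst : ∀ b ∈ Icc u T, (∀ t ∈ Ioo u b, G T - G t < F T - F t) → F b = F u) :
    F T - F u ≤ G T - G u := by
  by_contra! hlt
  set S := Icc u T ∩ {t | F T - F t ≤ G T - G t}
  have hTS : T ∈ S := ⟨⟨huT, le_rfl⟩, by simp⟩
  have hSbdd : BddBelow S := ⟨u, fun x hx => hx.1.1⟩
  have hScl : IsClosed S := isClosed_Icc.inter (isClosed_le (by fun_prop) (by fun_prop))
  have hsS : sInf S ∈ S := hScl.csInf_mem ⟨T, hTS⟩ hSbdd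
  have hgap : ∀ t ∈ Ioo u (sInf S), G T - G t < F T - F t := fun t ht =>
    not_le.mp fun hle => notMem_of_lt_csInf ht.2 hSbdd ⟨⟨ht.1.le, ht.2.le.trans hsS.1.2⟩, hle⟩
  have hFs : F (sInf S) = F u := hconst _ hsS.1 hgap
  have hGs : G u ≤ G (sInf S) := hGm hsS.1.1
  have hSineq : F T - F (sInf S) ≤ G T - G (sInf S) := hsS.2
  linarith

theorem tail_increment_le_of_flat {T : ℝ} {g : ℝ → ℝ} (hg : Continuous g)
    {K1 K2 : StieltjesFunction ℝ} (hK1c : Continuous K1) (hK2c : Continuous K2)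
    (hpos1 : ∀ t ∈ Icc 0 T, 0 ≤ g t + K1 T - K1 t)
    (hpos2 : ∀ t ∈ Icc 0 T, 0 ≤ g t + K2 T - K2 t)
    (hflat1 : (∫ t in Icc 0 T, (g t + K1 T - K1 t) ∂K1.measure) = 0) :
    ∀ t ∈ Icc 0 T, K1 T - K1 t ≤ K2 T - K2 t := by
  intro u hu
  refine sub_le_sub_of_forall_Ioo_lt_imp_eq hK1c hK2c K2.mono hu.2 fun b hb hgap => ?_
  have hsub : Ioo u b ⊆ Icc 0 T := fun t ht => ⟨hu.1.trans ht.1.le, ht.2.le.trans hb.2⟩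
  have hnull : K1.measure (Ioo u b) = 0 :=
    measure_eq_zero_of_setIntegral_eq_zero measurableSet_Icc
      (by fun_prop : Continuous fun t => g t + K1 T - K1 t).integrableOn_Icc hpos1 hflat1 hsub
      fun t ht => by linarith [hgap t ht, hpos2 t (hsub ht)]
  exact K1.eq_of_measure_Ioo_eq_zero hK1c.continuousAt hb.1 hnull

theorem flat_compensator_unique_general (T : ℝ)
    (g : ℝ → ℝ) (hg : Continuous g)
    (K1 K2 : StieltjesFunction ℝ)
    (hK1c : Continuous ⇑K1) (hK2c : Continuous ⇑K2)
    (hK10 : K1 0 = 0) (hK20 : K2 0 = 0)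
    (hpos1 : ∀ t ∈ Icc 0 T, 0 ≤ g t + K1 T - K1 t)
    (hpos2 : ∀ t ∈ Icc 0 T, 0 ≤ g t + K2 T - K2 t)
    (hflat1 : (∫ t in Icc 0 T, (g t + K1 T - K1 t) ∂K1.measure) = 0)
    (hflat2 : (∫ t in Icc 0 T, (g t + K2 T - K2 t) ∂K2.measure) = 0) :
    EqOn (⇑K1) (⇑K2) (Icc 0 T) := by
  have heq : ∀ t ∈ Icc 0 T, K1 T - K1 t = K2 T - K2 t := fun t ht =>
    le_antisymm (tail_increment_le_of_flat hg hK1c hK2c hpos1 hpos2 hflat1 t ht)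
      (tail_increment_le_of_flat hg hK2c hK1c hpos2 hpos1 hflat2 t ht)
  intro t ht
  have h0 := heq 0 ⟨le_rfl, ht.1.trans ht.2⟩
  rw [hK10, hK20] at h0
  linarith [heq t ht]

/-- Uniqueness of flat deterministic compensators: if two continuous non-decreasing
functions `K¹, K²` with `Kⁱ(0)=0` both make `hᵢ(t) = g(t) + Kⁱ(T) − Kⁱ(t)` non-negative
on `[0,T]` and both satisfy the Skorokhod condition `∫₀ᵀ hᵢ dKⁱ = 0`, then `K¹ = K²`. -/
theorem flat_compensator_unique (T : ℝ) (hT : 0 < T)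
    (g : ℝ → ℝ) (hg : Continuous g)
    (K1 K2 : StieltjesFunction ℝ)
    (hK1c : Continuous ⇑K1) (hK2c : Continuous ⇑K2)
    (hK10 : K1 0 = 0) (hK20 : K2 0 = 0)
    (hpos1 : ∀ t ∈ Icc 0 T, 0 ≤ g t + K1 T - K1 t)
    (hpos2 : ∀ t ∈ Icc 0 T, 0 ≤ g t + K2 T - K2 t)
    (hflat1 : (∫ t in Icc 0 T, (g t + K1 T - K1 t) ∂K1.measure) = 0)
    (hflat2 : (∫ t in Icc 0 T, (g t + K2 T - K2 t) ∂K2.measure) = 0) :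
    EqOn (⇑K1) (⇑K2) (Icc 0 T) :=
  flat_compensator_unique_general T g hg K1 K2 hK1c hK2c hK10 hK20 hpos1 hpos2 hflat1 hflat2
end

section
/- Let g : [0,T] → ℝ be continuous and let K, K' : [0,T] → ℝ be continuous non-decreasing functions with K(0) = K'(0) = 0. Assume: (i) g(t) + K(T) − K(t) ≥ 0 and g(t) + K'(T) − K'(t) ≥ 0 for all t; (ii) ∫₀ᵀ (g(t) + K(T) − K(t)) dK(t) = 0 (K is 'flat'). Then K(T) − K(t) ≤ K'(T) − K'(t) for all t ∈ [0,T]. -/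
/-!
Let `s` be the last time in `[t, T]` at which `K` still equals `K t`. If `s = T` the claim is
`0 ≤ K' T - K' t`. Otherwise `K` increases on every right neighbourhood of `s`, so `dK` charges it;
since the integrand `g + K T - K` is continuous, non-negative and has zero `dK`-integral, it must
vanish at `s`. Then `K T - K t = K T - K s = -g s ≤ K' T - K' s ≤ K' T - K' t`.
-/

open MeasureTheory Set Filter Topology

theorem exists_last_mem_Icc_eq {α β : Type*} [ConditionallyCompleteLinearOrder α]
    [TopologicalSpace α] [OrderTopology α] [TopologicalSpace β] [T1Space β]
    {f : α → β} {a b : α} (hf : ContinuousOn f (Icc a b)) (hab : a ≤ b) :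
    ∃ s ∈ Icc a b, f s = f a ∧ ∀ u ∈ Ioc s b, f u ≠ f a := by
  set S := Icc a b ∩ f ⁻¹' {f a}
  have hS : IsClosed S := hf.preimage_isClosed_of_isClosed isClosed_Icc isClosed_singleton
  have haS : a ∈ S := ⟨left_mem_Icc.2 hab, rfl⟩
  have hbdd : BddAbove S := ⟨b, fun x hx => hx.1.2⟩
  obtain ⟨hsIcc, hfs⟩ := hS.csSup_mem ⟨a, haS⟩ hbdd
  refine ⟨sSup S, hsIcc, hfs, fun u hu hfu => ?_⟩
  exact (le_csSup hbdd ⟨⟨hsIcc.1.trans hu.1.le, hu.2⟩, hfu⟩).not_gt hu.1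

namespace StieltjesFunction

variable {K : StieltjesFunction ℝ} {f : ℝ → ℝ} {S : Set ℝ}

theorem le_of_ae_eq_zero_of_ne_zero_on_Ioc (hf : f =ᵐ[K.measure.restrict S] 0) {a b : ℝ}
    (hS : Ioc a b ⊆ S) (hne : ∀ x ∈ Ioc a b, f x ≠ 0) : K b ≤ K a := by
  have hae : ∀ᵐ x ∂K.measure, x ∈ Ioc a b → f x = 0 :=
    (ae_restrict_iff' measurableSet_Ioc).1 (ae_restrict_of_ae_restrict_of_subset hS hf)
  have hnull : K.measure (Ioc a b) = 0 :=
    measure_eq_zero_iff_ae_notMem.2 <| hae.mono fun x hx hmem => hne x hmem (hx hmem)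
  rw [K.measure_Ioc, ENNReal.ofReal_eq_zero] at hnull
  linarith

theorem eq_zero_of_ae_eq_zero_of_forall_ne (hf : f =ᵐ[K.measure.restrict S] 0) {s b : ℝ}
    (hfs : ContinuousWithinAt f (Ioi s) s) (hsb : s < b) (hS : Ioc s b ⊆ S)
    (hK : ∀ u ∈ Ioc s b, K u ≠ K s) : f s = 0 := by
  by_contra hne
  obtain ⟨u, hsu, hu⟩ := mem_nhdsGT_iff_exists_Ioc_subset.1 (hfs.eventually_ne hne)
  have hmem : min u b ∈ Ioc s b := ⟨lt_min hsu hsb, min_le_right u b⟩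
  have hle : K (min u b) ≤ K s :=
    le_of_ae_eq_zero_of_ne_zero_on_Ioc hf ((Ioc_subset_Ioc_right (min_le_right u b)).trans hS)
      fun x hx => hu ⟨hx.1, hx.2.trans (min_le_left u b)⟩
  exact hK _ hmem (hle.antisymm (K.mono hmem.1.le))

end StieltjesFunction

theorem flat_compensator_minimal_general (T : ℝ)
    (g : ℝ → ℝ) (hg : Continuous g)
    (K : StieltjesFunction ℝ) (hKc : Continuous ⇑K)
    (K' : ℝ → ℝ)
    (hK'mono : MonotoneOn K' (Icc 0 T))
    (hpos : ∀ t ∈ Icc 0 T, 0 ≤ g t + K T - K t)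
    (hpos' : ∀ t ∈ Icc 0 T, 0 ≤ g t + K' T - K' t)
    (hflat : (∫ t in Icc 0 T, (g t + K T - K t) ∂K.measure) = 0) :
    ∀ t ∈ Icc 0 T, K T - K t ≤ K' T - K' t := by
  intro t ht
  have hfc : Continuous fun t => g t + K T - K t := (hg.add continuous_const).sub hKc
  have hf0 : (fun t => g t + K T - K t) =ᵐ[K.measure.restrict (Icc 0 T)] 0 :=
    (setIntegral_eq_zero_iff_of_nonneg_ae (ae_restrict_of_forall_mem measurableSet_Icc hpos)
      hfc.integrableOn_Icc).1 hflat
  obtain ⟨s, hs, hKs, hlast⟩ := exists_last_mem_Icc_eq hKc.continuousOn ht.2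
  have hs0T : s ∈ Icc 0 T := ⟨ht.1.trans hs.1, hs.2⟩
  have hpush : K T - K s ≤ K' T - K' s := by
    rcases hs.2.eq_or_lt with rfl | hsT
    · simp
    · have hzero := StieltjesFunction.eq_zero_of_ae_eq_zero_of_forall_ne hf0
        hfc.continuousWithinAt hsT (Ioc_subset_Icc_self.trans (Icc_subset_Icc_left hs0T.1))
        fun u hu => hKs ▸ hlast u hu
      linarith [hpos' s hs0T]
  calc K T - K t = K T - K s := by rw [hKs]
    _ ≤ K' T - K' s := hpush
    _ ≤ K' T - K' t := by linarith [hK'mono ht hs0T hs.1]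

/-- Minimality: a flat compensator yields the pointwise smallest remaining push
`K(T) − K(t)` among all admissible deterministic compensators. -/
theorem flat_compensator_minimal (T : ℝ) (hT : 0 < T)
    (g : ℝ → ℝ) (hg : Continuous g)
    (K : StieltjesFunction ℝ) (hKc : Continuous ⇑K) (hK0 : K 0 = 0)
    (K' : ℝ → ℝ) (hK'c : ContinuousOn K' (Icc 0 T))
    (hK'mono : MonotoneOn K' (Icc 0 T)) (hK'0 : K' 0 = 0)
    (hpos : ∀ t ∈ Icc 0 T, 0 ≤ g t + K T - K t)
    (hpos' : ∀ t ∈ Icc 0 T, 0 ≤ g t + K' T - K' t)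
    (hflat : (∫ t in Icc 0 T, (g t + K T - K t) ∂K.measure) = 0) :
    ∀ t ∈ Icc 0 T, K T - K t ≤ K' T - K' t :=
  flat_compensator_minimal_general T g hg K hKc K' hK'mono hpos hpos' hflat
end
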